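/- Let B be the free quaternion ring over R with basis 1, i, j, k associated to the ternary form q(x,y,z) = ax² + by² + cz² + uyz + vxz + wxy. Identify ⋀⁴B ≅ R via 1∧i∧j∧k ↦ −1. Then the quadratic map φ on ⋀²(B/R) defined by φ(x∧y) = 1∧x∧y∧xy satisfies φ(x(j∧k) + y(k∧i) + z(i∧j)) = q(x,y,z) for all x, y, z ∈ R; in particular φ(j∧k) = a, φ(k∧i) = b, φ(i∧j) = c, φ((k∧i)+(i∧j)) − φ(k∧i) − φ(i∧j) = u (and cyclically for v, w). -/

import Mathlib

/-!
In the basis `1, i, j, k` the first column of the determinant computing `1 ∧ α ∧ β ∧ αβ` is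
`(1, 0, 0, 0)`, so `φ(α ∧ β)` is minus the `3 × 3` determinant of the imaginary coordinates of
`α`, `β` and `αβ`. Expanding `αβ` with the multiplication table turns this determinant into `q`
evaluated at the `2 × 2` minors of `(α, β)`, which are the coordinates of `α ∧ β` on
`j ∧ k`, `k ∧ i`, `i ∧ j`.
-/

/-- The wedge `v 0 ∧ ⋯ ∧ v (n-1)` as an element of the `n`-th exterior power `⋀[R]^n M`. -/
noncomputable def wedge {R M : Type*} [CommRing R] [AddCommGroup M] [Module R M]
    (n : ℕ) (v : Fin n → M) : ⋀[R]^n M :=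
  ⟨ExteriorAlgebra.ιMulti R n v, ExteriorAlgebra.ιMulti_range R n (Set.mem_range_self v)⟩

open exteriorPower Module

section ExteriorPower

variable {R M : Type*} [CommRing R] [AddCommGroup M] [Module R M]

/-- An upper-triangular Gram matrix avoids dividing by `2`. -/
def ternaryForm (a b c u v w : R) : QuadraticMap R (Fin 3 → R) R :=
  Matrix.toQuadraticForm' !![a, w, v; 0, b, u; 0, 0, c]

theorem ternaryForm_apply (a b c u v w : R) (x : Fin 3 → R) :
    ternaryForm a b c u v w x =
      a * x 0 ^ 2 + b * x 1 ^ 2 + c * x 2 ^ 2 + u * (x 1 * x 2) + v * (x 0 * x 2)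
        + w * (x 0 * x 1) := by
  simp [ternaryForm, Matrix.toQuadraticForm', Matrix.toLinearMap₂'_apply', dotProduct,
    Matrix.mulVec, Fin.sum_univ_three]
  ring

theorem wedge_eq_ιMulti (n : ℕ) (v : Fin n → M) : wedge n v = ιMulti R n v := rfl

theorem LinearMap.apply_wedge_eq_mul_det {n : ℕ} (e : Basis (Fin n) R M)
    (g : ⋀[R]^n M →ₗ[R] R) (v : Fin n → M) :
    g (wedge n v) = g (wedge n e) * e.det v := by
  simpa [wedge_eq_ιMulti] using
    congr($((g.compAlternatingMap (ιMulti R n)).eq_smul_basis_det e) v)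

theorem Module.Basis.det_cons_self_zero {n : ℕ} (e : Basis (Fin (n + 1)) R M) (v : Fin n → M) :
    e.det (Fin.cons (e 0) v) = (Matrix.of fun i j => e.repr (v j) i.succ).det := by
  rw [e.det_apply, Matrix.det_succ_column_zero, Fin.sum_univ_succ]
  simp [Basis.toMatrix_apply, Matrix.submatrix, Fin.succ_ne_zero]

noncomputable def Module.Basis.wedgeMinor {ι : Type*} (e : Basis ι R M) (s t : ι) :
    ⋀[R]^2 M →ₗ[R] R :=
  pairingDual R M 2 (ιMulti R 2 ![e.coord s, e.coord t])

theorem Module.Basis.wedgeMinor_wedge {ι : Type*} (e : Basis ι R M) (s t : ι) (x y : M) :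
    e.wedgeMinor s t (wedge 2 ![x, y]) = e.repr x s * e.repr y t - e.repr x t * e.repr y s := by
  simp [wedgeMinor, wedge_eq_ιMulti, Matrix.det_fin_two]

noncomputable def Module.Basis.quaternionForm (e : Basis (Fin 4) R M) (a b c u v w : R) :
    QuadraticMap R (⋀[R]^2 M) R :=
  (ternaryForm a b c u v w).comp
    (LinearMap.pi ![e.wedgeMinor 2 3, e.wedgeMinor 3 1, e.wedgeMinor 1 2])

theorem Module.Basis.quaternionForm_apply (e : Basis (Fin 4) R M) (a b c u v w : R)
    (p : ⋀[R]^2 M) :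
    e.quaternionForm a b c u v w p =
      ternaryForm a b c u v w ![e.wedgeMinor 2 3 p, e.wedgeMinor 3 1 p, e.wedgeMinor 1 2 p] := by
  simp only [quaternionForm, QuadraticMap.comp_apply]
  congr 1
  ext t
  fin_cases t <;> rfl

theorem Module.Basis.quaternionForm_basis_wedges (e : Basis (Fin 4) R M) (a b c u v w x y z : R) :
    e.quaternionForm a b c u v w
        (x • wedge 2 ![e 2, e 3] + y • wedge 2 ![e 3, e 1] + z • wedge 2 ![e 1, e 2]) =
      a * x ^ 2 + b * y ^ 2 + c * z ^ 2 + u * (y * z) + v * (x * z) + w * (x * y) := by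
  simp [quaternionForm_apply, ternaryForm_apply, wedgeMinor_wedge]

end ExteriorPower

section FreeQuaternionRing

variable {R B : Type*} [CommRing R] [Ring B] [Algebra R B]

def quaternionMul (a b c u v w : R) (x y : Fin 4 → R) : Fin 4 → R :=
  ![x 0 * y 0 - x 1 * y 1 * (b * c) + x 1 * y 2 * (c * w) - x 1 * y 3 * (u * w)
      - x 2 * y 1 * (u * v) - x 2 * y 2 * (a * c) + x 2 * y 3 * (a * u) + x 3 * y 1 * (b * v)
      - x 3 * y 2 * (v * w) - x 3 * y 3 * (a * b),
    x 0 * y 1 + x 1 * y 0 + x 1 * y 1 * u + x 1 * y 3 * w + x 2 * y 1 * v - x 2 * y 3 * a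
      + x 3 * y 2 * a,
    x 0 * y 2 + x 2 * y 0 + x 1 * y 3 * b + x 2 * y 1 * u + x 2 * y 2 * v - x 3 * y 1 * b
      + x 3 * y 2 * w,
    x 0 * y 3 + x 3 * y 0 - x 1 * y 2 * c + x 1 * y 3 * u + x 2 * y 1 * c + x 3 * y 2 * v
      + x 3 * y 3 * w]

variable {a b c u v w : R} {i j k : B} {e : Basis (Fin 4) R B}

theorem Module.Basis.equivFun_mul_eq_quaternionMul (he : ⇑e = ![1, i, j, k])
    (hii : i * i = u • i - algebraMap R B (b * c))
    (hjj : j * j = v • j - algebraMap R B (a * c))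
    (hkk : k * k = w • k - algebraMap R B (a * b))
    (hjk : j * k = a • (algebraMap R B u - i))
    (hki : k * i = b • (algebraMap R B v - j))
    (hij : i * j = c • (algebraMap R B w - k))
    (hkj : k * j = algebraMap R B (-(v * w)) + a • i + w • j + v • k)
    (hik : i * k = algebraMap R B (-(u * w)) + w • i + b • j + u • k)
    (hji : j * i = algebraMap R B (-(u * v)) + v • i + u • j + c • k) (x y : B) :
    e.equivFun (x * y) = quaternionMul a b c u v w (e.equivFun x) (e.equivFun y) := by
  have hsymm (z : Fin 4 → R) : e.equivFun.symm z = z 0 • 1 + z 1 • i + z 2 • j + z 3 • k := by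
    simp [Basis.equivFun_symm_apply, Fin.sum_univ_four, he]
  obtain ⟨x, rfl⟩ := e.equivFun.symm.surjective x
  obtain ⟨y, rfl⟩ := e.equivFun.symm.surjective y
  rw [LinearEquiv.apply_symm_apply, LinearEquiv.apply_symm_apply, ← LinearEquiv.eq_symm_apply,
    hsymm, hsymm, hsymm]
  simp only [quaternionMul, Matrix.cons_val, mul_add, add_mul, smul_mul_assoc, mul_smul_comm,
    smul_smul, one_mul, mul_one, hii, hjj, hkk, hjk, hki, hij, hkj, hik, hji,
    Algebra.algebraMap_eq_smul_one]
  module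

theorem Module.Basis.quaternionForm_wedge (he0 : e 0 = 1)
    (hmul : ∀ x y : B, e.equivFun (x * y) = quaternionMul a b c u v w (e.equivFun x) (e.equivFun y))
    (x y : B) :
    e.quaternionForm a b c u v w (wedge 2 ![x, y]) = -e.det ![1, x, y, x * y] := by
  rw [← he0, show ![e 0, x, y, x * y] = Fin.cons (e 0) ![x, y, x * y] from rfl,
    e.det_cons_self_zero, Matrix.det_fin_three]
  have hxy (t : Fin 4) : e.repr (x * y) t = quaternionMul a b c u v w (e.repr x) (e.repr y) t :=
    congr_fun (hmul x y) t
  simp only [quaternionForm_apply, ternaryForm_apply, wedgeMinor_wedge, Matrix.of_apply,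
    Matrix.cons_val, Fin.succ_zero_eq_one, Fin.succ_one_eq_two,
    show (Fin.succ 2 : Fin 4) = 3 from rfl, hxy, quaternionMul]
  ring

end FreeQuaternionRing

/-- For the free quaternion ring `B` associated to `q = ax² + by² + cz² + uyz + vxz + wxy`,
identifying `⋀⁴B ≅ R` by `1∧i∧j∧k ↦ −1`, the canonical exterior form `φ`, characterized by
`φ(α∧β) = 1∧α∧β∧αβ`, satisfies `φ(x(j∧k) + y(k∧i) + z(i∧j)) = q(x,y,z)`. -/
theorem stmt_19 {R B : Type*} [CommRing R] [Ring B] [Algebra R B]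
    (a b c u v w : R) (i j k : B)
    (bB : Module.Basis (Fin 4) R B) (hb : ⇑bB = ![1, i, j, k])
    (hii : i * i = u • i - algebraMap R B (b * c))
    (hjj : j * j = v • j - algebraMap R B (a * c))
    (hkk : k * k = w • k - algebraMap R B (a * b))
    (hjk : j * k = a • (algebraMap R B u - i))
    (hki : k * i = b • (algebraMap R B v - j))
    (hij : i * j = c • (algebraMap R B w - k))
    (hkj : k * j = algebraMap R B (-(v * w)) + a • i + w • j + v • k)
    (hik : i * k = algebraMap R B (-(u * w)) + w • i + b • j + u • k)
    (hji : j * i = algebraMap R B (-(u * v)) + v • i + u • j + c • k)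
    (f : (⋀[R]^4 B) ≃ₗ[R] R)
    (hf : f (wedge 4 ![1, i, j, k]) = -1) :
    ∃ φ : QuadraticMap R (⋀[R]^2 B) R,
      (∀ α β : B, φ (wedge 2 ![α, β]) = f (wedge 4 ![1, α, β, α * β])) ∧
      (∀ x y z : R,
        φ (x • wedge 2 ![j, k] + y • wedge 2 ![k, i] + z • wedge 2 ![i, j])
          = a * x ^ 2 + b * y ^ 2 + c * z ^ 2 + u * (y * z) + v * (x * z) + w * (x * y)) := by
  have hmul := bB.equivFun_mul_eq_quaternionMul hb hii hjj hkk hjk hki hij hkj hik hji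
  have hf_wedge (x : Fin 4 → B) : f (wedge 4 x) = -bB.det x := by
    rw [← LinearEquiv.coe_coe, LinearMap.apply_wedge_eq_mul_det bB, hb, LinearEquiv.coe_coe, hf,
      neg_one_mul]
  refine ⟨bB.quaternionForm a b c u v w, fun α β => ?_, fun x y z => ?_⟩
  · rw [bB.quaternionForm_wedge (congr_fun hb 0) hmul, hf_wedge]
  · simpa [hb] using bB.quaternionForm_basis_wedges a b c u v w x y z
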